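/- arXiv:2109.02565 — 2 statements merged into one kernel-verified Lean document; each statement's English description precedes it below -/
import Mathlib

section
/- There is an absolute constant C such that for all s ∈ (0,1], all α > 0 and all y ∈ ℝ: (i) for every differentiable g : ℝ → ℝ with g, g' locally integrable, |δ_α[L_s, g](y)| ≤ C·s·∫_{|t| ≤ α} ( |g'(y+t)| + ⟨α⟩^{−1}·|g(y+t)| ) dt; (ii) for all odd differentiable g₁, g₂ : ℝ → ℝ with g_i, g_i' square-integrable, |δ_α[g₁, g₂](y)| ≤ C·min{α^{−1/2}, α^{−3/2}}·( ‖g₂‖_{H¹}·∫_{|t| ≤ α} |g₁(y+t)| dt + ‖g₁‖_{H¹}·∫_{|t| ≤ α} |g₂(y+t)| dt ). -/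
open MeasureTheory Real Set Filter

/-- Sliding average `⨍_α f(y) = (1/α) ∫_{y-α}^{y} f(z) dz`. -/
noncomputable def fint (α : ℝ) (f : ℝ → ℝ) (y : ℝ) : ℝ :=
  (1 / α) * ∫ z in (y - α)..y, f z

/-- Finite difference slope `Δ_α f(y) = (f(y) - f(y-α))/α`. -/
noncomputable def slopeOp (α : ℝ) (f : ℝ → ℝ) (y : ℝ) : ℝ :=
  (f y - f (y - α)) / α

/-- The profile `L_s(y) = (2s/π) arctan((1+s²/3) y)`. -/
noncomputable def Ls (s y : ℝ) : ℝ := (2 * s / Real.pi) * Real.arctan ((1 + s ^ 2 / 3) * y)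

/-- `δ_α[f,g](y) = ⨍_α f ⨍_α g - ⨍_{-α} f ⨍_{-α} g`. -/
noncomputable def deltaOp (α : ℝ) (f g : ℝ → ℝ) (y : ℝ) : ℝ :=
  fint α f y * fint α g y - fint (-α) f y * fint (-α) g y

/-- `J_α[f,g](y) = ⨍_α f ⨍_α g - 2 f g + ⨍_{-α} f ⨍_{-α} g`. -/
noncomputable def Jop (α : ℝ) (f g : ℝ → ℝ) (y : ℝ) : ℝ :=
  fint α f y * fint α g y - 2 * f y * g y + fint (-α) f y * fint (-α) g y

/-- The `H¹` norm `(∫ g² + ∫ (g')²)^{1/2}`. -/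
noncomputable def H1norm (g : ℝ → ℝ) : ℝ :=
  Real.sqrt ((∫ y : ℝ, g y ^ 2) + ∫ y : ℝ, deriv g y ^ 2)

/-!
The discrete Leibniz rule
`δ_α[f,g] = ⨍_α f · (⨍_α g - ⨍_{-α} g) + (⨍_α f - ⨍_{-α} f) · ⨍_{-α} g`
reduces both bounds to estimates on the window `[y - α, y + α]`. A difference
`⨍_α f - ⨍_{-α} f` is the average of the increment `f z - f (z + α)`: for `f = g` this is at
most `∫ |g'|` over the window, and for `f = L_s`, which is bounded by `s` and `s`-Lipschitz, it
is at most `s · min 2 α ≤ 3 s α / ⟨α⟩`. For (ii), Cauchy–Schwarz on windows of length `α` and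
`2α` gives `|⨍ g| ≤ α^{-1/2} ‖g‖_{L²}` and `|⨍_α g - ⨍_{-α} g| ≤ (2α)^{1/2} ‖g'‖_{L²}`; the
Leibniz form then yields the bound with `α^{-1/2}`, and the crude bound
`|δ_α[g₁,g₂]| ≤ |⨍_α g₁| |⨍_α g₂| + |⨍_{-α} g₁| |⨍_{-α} g₂|` the one with `α^{-3/2}`.
-/

open intervalIntegral

theorem setIntegral_Icc_comp_add {α : ℝ} (hα : 0 ≤ α) (y : ℝ) (F : ℝ → ℝ) :
    ∫ t in Icc (-α) α, F (y + t) = ∫ z in (y - α)..(y + α), F z := by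
  rw [integral_Icc_eq_integral_Ioc, ← integral_of_le (by linarith), integral_comp_add_left,
    ← sub_eq_add_neg]

section Averages

variable {f : ℝ → ℝ} {α y M : ℝ}

theorem fint_neg (α : ℝ) (f : ℝ → ℝ) (y : ℝ) : fint (-α) f y = fint α f (y + α) := by
  unfold fint
  rw [sub_neg_eq_add, add_sub_cancel_right, integral_symm, one_div_neg_eq_neg_one_div, neg_mul_neg]

theorem integral_abs_le_integral_abs_of_subinterval {a b c d : ℝ} (hac : a ≤ c) (hcd : c ≤ d)
    (hdb : d ≤ b) (hf : IntervalIntegrable f volume a b) :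
    ∫ x in c..d, |f x| ≤ ∫ x in a..b, |f x| :=
  integral_mono_interval hac hcd hdb (.of_forall fun _ ↦ abs_nonneg _) hf.abs

theorem abs_fint_le_of_abs_le (hα : 0 < α) (hM : ∀ x ∈ Ioc (y - α) y, |f x| ≤ M) :
    |fint α f y| ≤ M := by
  have h := norm_integral_le_of_norm_le_const (a := y - α) (b := y) (C := M) (f := f)
    (by rwa [uIoc_of_le (by linarith)])
  rw [Real.norm_eq_abs, sub_sub_cancel, abs_of_pos hα] at h
  unfold fint
  rw [abs_mul, abs_of_pos (one_div_pos.2 hα)]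
  calc 1 / α * |∫ z in (y - α)..y, f z| ≤ 1 / α * (M * α) := by gcongr
    _ = M := by field_simp

theorem abs_fint_le_integral_abs (hα : 0 < α) :
    |fint α f y| ≤ 1 / α * ∫ z in (y - α)..y, |f z| := by
  unfold fint
  rw [abs_mul, abs_of_pos (one_div_pos.2 hα)]
  gcongr
  exact abs_integral_le_integral_abs (by linarith)

theorem abs_fint_le_window (hα : 0 < α) (hf : IntervalIntegrable f volume (y - α) (y + α)) :
    |fint α f y| ≤ 1 / α * ∫ z in (y - α)..(y + α), |f z| :=
  abs_fint_le_integral_abs hα |>.trans <| by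
    gcongr
    exact integral_abs_le_integral_abs_of_subinterval le_rfl (by linarith) (by linarith) hf

theorem abs_fint_neg_le_window (hα : 0 < α) (hf : IntervalIntegrable f volume (y - α) (y + α)) :
    |fint (-α) f y| ≤ 1 / α * ∫ z in (y - α)..(y + α), |f z| := by
  rw [fint_neg]
  refine abs_fint_le_integral_abs hα |>.trans ?_
  rw [add_sub_cancel_right]
  gcongr
  exact integral_abs_le_integral_abs_of_subinterval (by linarith) (by linarith) le_rfl hf

theorem abs_fint_sub_fint_neg_le (hα : 0 < α) (hf : IntervalIntegrable f volume (y - α) (y + α))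
    (hM : ∀ z ∈ Ioc (y - α) y, |f z - f (z + α)| ≤ M) :
    |fint α f y - fint (-α) f y| ≤ M := by
  have hleft : IntervalIntegrable f volume (y - α) y :=
    hf.mono_set (uIcc_subset_uIcc_left (mem_uIcc_of_le (by linarith) (by linarith)))
  have hright : IntervalIntegrable (fun z ↦ f (z + α)) volume (y - α) y := by
    simpa using (hf.mono_set (uIcc_subset_uIcc_right
      (mem_uIcc_of_le (by linarith) (by linarith)))).comp_add_right α
  have hshift : fint (-α) f y = 1 / α * ∫ z in (y - α)..y, f (z + α) := by
    rw [fint_neg, fint, integral_comp_add_right, sub_add_cancel, add_sub_cancel_right]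
  have hdiff : fint α f y - fint (-α) f y = fint α (fun z ↦ f z - f (z + α)) y := by
    rw [hshift, fint, fint, integral_sub hleft hright, mul_sub]
  exact hdiff ▸ abs_fint_le_of_abs_le hα hM

end Averages

section Derivatives

variable {g : ℝ → ℝ} {α y : ℝ}

theorem abs_sub_le_integral_abs_deriv (hg : Differentiable ℝ g) {a b : ℝ} (hab : a ≤ b)
    (hg' : IntervalIntegrable (deriv g) volume a b) :
    |g b - g a| ≤ ∫ x in a..b, |deriv g x| := by
  rw [← integral_deriv_eq_sub (fun x _ ↦ hg x) hg']
  exact abs_integral_le_integral_abs hab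

theorem abs_fint_sub_fint_neg_le_integral_abs_deriv (hα : 0 < α) (hg : Differentiable ℝ g)
    (hg' : IntervalIntegrable (deriv g) volume (y - α) (y + α)) :
    |fint α g y - fint (-α) g y| ≤ ∫ z in (y - α)..(y + α), |deriv g z| := by
  refine abs_fint_sub_fint_neg_le hα (hg.continuous.intervalIntegrable _ _) fun z hz ↦ ?_
  obtain ⟨hz₁, hz₂⟩ := hz
  rw [abs_sub_comm]
  refine (abs_sub_le_integral_abs_deriv hg (by linarith) (hg'.mono_set ?_)).trans
    (integral_abs_le_integral_abs_of_subinterval hz₁.le (by linarith) (by linarith) hg')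
  rw [uIcc_of_le (by linarith), uIcc_of_le (by linarith)]
  exact Icc_subset_Icc hz₁.le (by linarith)

end Derivatives

theorem abs_deltaOp_le (α : ℝ) (f g : ℝ → ℝ) (y : ℝ) :
    |deltaOp α f g y| ≤ |fint α f y| * |fint α g y - fint (-α) g y|
      + |fint α f y - fint (-α) f y| * |fint (-α) g y| := by
  have hleibniz : deltaOp α f g y = fint α f y * (fint α g y - fint (-α) g y)
      + (fint α f y - fint (-α) f y) * fint (-α) g y := by
    unfold deltaOp; ring
  rw [hleibniz, ← abs_mul, ← abs_mul]
  exact abs_add_le _ _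

theorem abs_deltaOp_le_of_abs_le {f g : ℝ → ℝ} {α y M N : ℝ} (hα : 0 < α) (hf : Continuous f)
    (hfM : ∀ x, |f x| ≤ M) (hfN : ∀ z, |f z - f (z + α)| ≤ N) (hg : Differentiable ℝ g)
    (hg' : IntervalIntegrable (deriv g) volume (y - α) (y + α)) :
    |deltaOp α f g y| ≤
      M * (∫ z in (y - α)..(y + α), |deriv g z|) + N / α * ∫ z in (y - α)..(y + α), |g z| := by
  have hN : 0 ≤ N := (abs_nonneg _).trans (hfN 0)
  refine (abs_deltaOp_le α f g y).trans ?_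
  apply add_le_add
  · exact mul_le_mul (abs_fint_le_of_abs_le hα fun x _ ↦ hfM x)
      (abs_fint_sub_fint_neg_le_integral_abs_deriv hα hg hg') (abs_nonneg _)
      ((abs_nonneg _).trans (hfM 0))
  · calc _ ≤ N * (1 / α * ∫ z in (y - α)..(y + α), |g z|) :=
          mul_le_mul (abs_fint_sub_fint_neg_le hα (hf.intervalIntegrable _ _) fun z _ ↦ hfN z)
            (abs_fint_neg_le_window hα (hg.continuous.intervalIntegrable _ _)) (abs_nonneg _) hN
      _ = _ := by ring

section Profile

variable {s : ℝ}

theorem Real.lipschitzWith_arctan : LipschitzWith 1 arctan := by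
  refine lipschitzWith_of_nnnorm_deriv_le differentiable_arctan fun x ↦ ?_
  rw [← NNReal.coe_le_coe, coe_nnnorm, deriv_arctan, NNReal.coe_one, norm_of_nonneg (by positivity)]
  exact div_le_one_of_le₀ (by nlinarith) (by positivity)

theorem continuous_Ls (s : ℝ) : Continuous (Ls s) := by
  unfold Ls; fun_prop

theorem abs_Ls_le (hs : 0 < s) (x : ℝ) : |Ls s x| ≤ s := by
  rw [Ls, abs_mul, abs_of_pos (by positivity)]
  calc 2 * s / π * |arctan ((1 + s ^ 2 / 3) * x)| ≤ 2 * s / π * (π / 2) := by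
        gcongr
        exact abs_le.2 ⟨(neg_pi_div_two_lt_arctan _).le, (arctan_lt_pi_div_two _).le⟩
    _ = s := by field_simp

/-- Here `s ≤ 1` makes the Lipschitz constant `(2s/π)(1 + s²/3)` of `L_s` at most `s`. -/
theorem abs_Ls_sub_Ls_le (hs : 0 < s) (hs1 : s ≤ 1) (a b : ℝ) :
    |Ls s a - Ls s b| ≤ s * |a - b| := by
  have harctan := lipschitzWith_arctan.dist_le_mul ((1 + s ^ 2 / 3) * a) ((1 + s ^ 2 / 3) * b)
  simp only [Real.dist_eq, NNReal.coe_one, one_mul, ← mul_sub, abs_mul,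
    abs_of_pos (show 0 < 1 + s ^ 2 / 3 by positivity)] at harctan
  rw [Ls, Ls, ← mul_sub, abs_mul, abs_of_pos (by positivity)]
  calc 2 * s / π * |arctan ((1 + s ^ 2 / 3) * a) - arctan ((1 + s ^ 2 / 3) * b)|
      ≤ 2 * s / π * ((1 + s ^ 2 / 3) * |a - b|) := by gcongr
    _ = (2 * s * (1 + s ^ 2 / 3)) / π * |a - b| := by ring
    _ ≤ s * |a - b| := by
        gcongr
        rw [div_le_iff₀ pi_pos]
        nlinarith [pi_gt_three]

theorem min_two_mul_sqrt_one_add_sq_le {α : ℝ} (hα : 0 ≤ α) : min 2 α * √(1 + α ^ 2) ≤ 3 * α := by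
  rcases le_total α 1 with h | h
  · calc min 2 α * √(1 + α ^ 2) ≤ α * 2 := by
          gcongr
          · exact min_le_right _ _
          · exact sqrt_le_iff.2 ⟨by norm_num, by nlinarith⟩
      _ ≤ 3 * α := by linarith
  · calc min 2 α * √(1 + α ^ 2) ≤ 2 * (3 / 2 * α) := by
          gcongr
          · exact min_le_left _ _
          · exact sqrt_le_iff.2 ⟨by positivity, by nlinarith⟩
      _ = 3 * α := by ring

theorem abs_Ls_sub_Ls_add_le (hs : 0 < s) (hs1 : s ≤ 1) {α : ℝ} (hα : 0 ≤ α) (z : ℝ) :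
    |Ls s z - Ls s (z + α)| ≤ 3 * s * α * (√(1 + α ^ 2))⁻¹ := by
  have hbound : |Ls s z - Ls s (z + α)| ≤ s * min 2 α := by
    rw [mul_min_of_nonneg _ _ hs.le]
    refine le_min ?_ ?_
    · linarith [abs_sub (Ls s z) (Ls s (z + α)), abs_Ls_le hs z, abs_Ls_le hs (z + α)]
    · simpa [abs_of_nonneg hα] using abs_Ls_sub_Ls_le hs hs1 z (z + α)
  refine hbound.trans ?_
  rw [← div_eq_mul_inv, le_div_iff₀ (by positivity), mul_assoc]
  nlinarith [min_two_mul_sqrt_one_add_sq_le hα]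

end Profile

theorem abs_deltaOp_Ls_le {s α y : ℝ} {g : ℝ → ℝ} (hs : 0 < s) (hs1 : s ≤ 1) (hα : 0 < α)
    (hg : Differentiable ℝ g) (hg' : IntervalIntegrable (deriv g) volume (y - α) (y + α)) :
    |deltaOp α (Ls s) g y| ≤ 3 * s *
      ∫ t in Icc (-α) α, (|deriv g (y + t)| + (√(1 + α ^ 2))⁻¹ * |g (y + t)|) := by
  have hg_int : IntervalIntegrable g volume (y - α) (y + α) := hg.continuous.intervalIntegrable _ _
  rw [setIntegral_Icc_comp_add hα.le y fun z ↦ |deriv g z| + (√(1 + α ^ 2))⁻¹ * |g z|,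
    integral_add hg'.abs (hg_int.abs.const_mul _), intervalIntegral.integral_const_mul]
  set D := ∫ z in (y - α)..(y + α), |deriv g z|
  set G := ∫ z in (y - α)..(y + α), |g z|
  have hD : 0 ≤ D := integral_nonneg (by linarith) fun _ _ ↦ abs_nonneg _
  calc |deltaOp α (Ls s) g y| ≤ s * D + 3 * s * α * (√(1 + α ^ 2))⁻¹ / α * G :=
        abs_deltaOp_le_of_abs_le hα (continuous_Ls s) (abs_Ls_le hs)
          (abs_Ls_sub_Ls_add_le hs hs1 hα.le) hg hg'
    _ = s * D + 3 * s * ((√(1 + α ^ 2))⁻¹ * G) := by field_simp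
    _ ≤ 3 * s * (D + (√(1 + α ^ 2))⁻¹ * G) := by nlinarith

theorem integral_abs_le_sqrt_mul_sqrt_integral_sq {f : ℝ → ℝ} (hf : MemLp f 2) {a b : ℝ}
    (hab : a ≤ b) :
    ∫ x in a..b, |f x| ≤ √(b - a) * √(∫ x, f x ^ 2) := by
  have hholder := integral_mul_le_Lp_mul_Lq_of_nonneg (μ := volume.restrict (Ioc a b))
    Real.HolderConjugate.two_two (f := fun _ ↦ (1 : ℝ)) (g := fun x ↦ |f x|)
    (.of_forall fun _ ↦ zero_le_one) (.of_forall fun _ ↦ abs_nonneg _)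
    (memLp_const 1) (by rw [ENNReal.ofReal_ofNat]; exact hf.abs.restrict (Ioc a b))
  simp only [one_mul, MeasureTheory.integral_const, smul_eq_mul, one_pow, mul_one,
    measureReal_restrict_apply_univ, volume_real_Ioc_of_le hab, rpow_two, sq_abs,
    ← sqrt_eq_rpow] at hholder
  rw [integral_of_le hab]
  refine hholder.trans (mul_le_mul_of_nonneg_left (sqrt_le_sqrt ?_) (sqrt_nonneg _))
  exact setIntegral_le_integral hf.integrable_sq (.of_forall fun _ ↦ sq_nonneg _)

theorem H1norm_nonneg (g : ℝ → ℝ) : 0 ≤ H1norm g := sqrt_nonneg _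

theorem sqrt_integral_sq_le_H1norm (g : ℝ → ℝ) : √(∫ x, g x ^ 2) ≤ H1norm g :=
  sqrt_le_sqrt (le_add_of_nonneg_right (integral_nonneg fun _ ↦ sq_nonneg _))

theorem sqrt_integral_deriv_sq_le_H1norm (g : ℝ → ℝ) : √(∫ x, deriv g x ^ 2) ≤ H1norm g :=
  sqrt_le_sqrt (le_add_of_nonneg_left (integral_nonneg fun _ ↦ sq_nonneg _))

section SobolevBounds

variable {g g₁ g₂ : ℝ → ℝ} {α : ℝ}

theorem abs_fint_le_inv_sqrt_mul_H1norm (hα : 0 < α) (hg : MemLp g 2) (y : ℝ) :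
    |fint α g y| ≤ (√α)⁻¹ * H1norm g := by
  have hcs := integral_abs_le_sqrt_mul_sqrt_integral_sq hg (show y - α ≤ y by linarith)
  rw [sub_sub_cancel] at hcs
  calc |fint α g y| ≤ 1 / α * (√α * √(∫ x, g x ^ 2)) :=
        (abs_fint_le_integral_abs hα).trans (by gcongr)
    _ = (√α)⁻¹ * √(∫ x, g x ^ 2) := by
        rw [← mul_assoc, one_div_mul_eq_div, sqrt_div_self', one_div]
    _ ≤ (√α)⁻¹ * H1norm g := by gcongr; exact sqrt_integral_sq_le_H1norm g

theorem abs_fint_sub_fint_neg_le_sqrt_mul_H1norm (hα : 0 < α) (hg : Differentiable ℝ g)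
    (hg' : MemLp (deriv g) 2) (y : ℝ) :
    |fint α g y - fint (-α) g y| ≤ √(2 * α) * H1norm g := by
  have hcs := integral_abs_le_sqrt_mul_sqrt_integral_sq hg' (show y - α ≤ y + α by linarith)
  rw [show y + α - (y - α) = 2 * α by ring] at hcs
  calc |fint α g y - fint (-α) g y| ≤ ∫ z in (y - α)..(y + α), |deriv g z| :=
        abs_fint_sub_fint_neg_le_integral_abs_deriv hα hg <|
          (hg'.locallyIntegrable one_le_two).integrableOn_isCompact isCompact_uIcc
            |>.intervalIntegrable
    _ ≤ √(2 * α) * H1norm g := hcs.trans (by gcongr; exact sqrt_integral_deriv_sq_le_H1norm g)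

theorem abs_deltaOp_le_sqrt_two_div_sqrt {y : ℝ} (hα : 0 < α) (hg₁ : Differentiable ℝ g₁)
    (hg₂ : Differentiable ℝ g₂) (hg₁' : MemLp (deriv g₁) 2) (hg₂' : MemLp (deriv g₂) 2) :
    |deltaOp α g₁ g₂ y| ≤ √2 * (√α)⁻¹ * (H1norm g₂ * (∫ z in (y - α)..(y + α), |g₁ z|)
      + H1norm g₁ * ∫ z in (y - α)..(y + α), |g₂ z|) := by
  have hH₁ := H1norm_nonneg g₁
  have hG₁ : 0 ≤ ∫ z in (y - α)..(y + α), |g₁ z| :=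
    intervalIntegral.integral_nonneg (by linarith) fun _ _ ↦ abs_nonneg _
  have hcoeff : √(2 * α) * (1 / α) = √2 * (√α)⁻¹ := by
    rw [sqrt_mul zero_le_two, mul_assoc, mul_one_div, sqrt_div_self', one_div]
  calc |deltaOp α g₁ g₂ y|
      ≤ (1 / α * ∫ z in (y - α)..(y + α), |g₁ z|) * (√(2 * α) * H1norm g₂)
        + √(2 * α) * H1norm g₁ * (1 / α * ∫ z in (y - α)..(y + α), |g₂ z|) := by
        refine (abs_deltaOp_le α g₁ g₂ y).trans (add_le_add ?_ ?_)
        · exact mul_le_mul (abs_fint_le_window hα (hg₁.continuous.intervalIntegrable _ _))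
            (abs_fint_sub_fint_neg_le_sqrt_mul_H1norm hα hg₂ hg₂' y) (abs_nonneg _)
            (mul_nonneg (one_div_pos.2 hα).le hG₁)
        · exact mul_le_mul (abs_fint_sub_fint_neg_le_sqrt_mul_H1norm hα hg₁ hg₁' y)
            (abs_fint_neg_le_window hα (hg₂.continuous.intervalIntegrable _ _)) (abs_nonneg _)
            (mul_nonneg (sqrt_nonneg _) hH₁)
    _ = _ := by rw [← hcoeff]; ring

theorem abs_deltaOp_le_two_div_sqrt_cube {y : ℝ} (hα : 0 < α)
    (hg₁ : IntervalIntegrable g₁ volume (y - α) (y + α)) (hg₂ : MemLp g₂ 2) :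
    |deltaOp α g₁ g₂ y| ≤ 2 * (α⁻¹ * (√α)⁻¹) * (H1norm g₂ * ∫ z in (y - α)..(y + α), |g₁ z|) := by
  have hG₁ : 0 ≤ ∫ z in (y - α)..(y + α), |g₁ z| :=
    intervalIntegral.integral_nonneg (by linarith) fun _ _ ↦ abs_nonneg _
  calc |deltaOp α g₁ g₂ y|
      ≤ |fint α g₁ y| * |fint α g₂ y| + |fint (-α) g₁ y| * |fint (-α) g₂ y| := by
        rw [deltaOp, ← abs_mul, ← abs_mul]
        exact abs_sub _ _
    _ ≤ (1 / α * ∫ z in (y - α)..(y + α), |g₁ z|) * ((√α)⁻¹ * H1norm g₂)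
        + (1 / α * ∫ z in (y - α)..(y + α), |g₁ z|) * ((√α)⁻¹ * H1norm g₂) := by
        gcongr
        · exact abs_fint_le_window hα hg₁
        · exact abs_fint_le_inv_sqrt_mul_H1norm hα hg₂ y
        · exact abs_fint_neg_le_window hα hg₁
        · rw [fint_neg]; exact abs_fint_le_inv_sqrt_mul_H1norm hα hg₂ _
    _ = _ := by ring

end SobolevBounds

theorem rpow_neg_one_half_eq {α : ℝ} (hα : 0 ≤ α) : α ^ (-(1:ℝ)/2) = (√α)⁻¹ := by
  rw [neg_div, rpow_neg hα, ← sqrt_eq_rpow]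

theorem rpow_neg_three_halves_eq {α : ℝ} (hα : 0 < α) :
    α ^ (-(3:ℝ)/2) = α⁻¹ * (√α)⁻¹ := by
  rw [show -(3:ℝ)/2 = -1 + -(1:ℝ)/2 by ring, rpow_add hα, rpow_neg_one,
    rpow_neg_one_half_eq hα.le]

theorem abs_deltaOp_le_min_rpow {g₁ g₂ : ℝ → ℝ} {α y : ℝ} (hα : 0 < α)
    (hg₁ : Differentiable ℝ g₁) (hg₂ : Differentiable ℝ g₂)
    (hg₂L2 : MemLp g₂ 2) (hg₁' : MemLp (deriv g₁) 2) (hg₂' : MemLp (deriv g₂) 2) :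
    |deltaOp α g₁ g₂ y| ≤ 3 * min (α ^ (-(1:ℝ)/2)) (α ^ (-(3:ℝ)/2)) *
      ((H1norm g₂) * (∫ t in Icc (-α) α, |g₁ (y + t)|)
        + (H1norm g₁) * ∫ t in Icc (-α) α, |g₂ (y + t)|) := by
  rw [setIntegral_Icc_comp_add hα.le y fun z ↦ |g₁ z|,
    setIntegral_Icc_comp_add hα.le y fun z ↦ |g₂ z|,
    rpow_neg_one_half_eq hα.le, rpow_neg_three_halves_eq hα]
  have hsmall := abs_deltaOp_le_sqrt_two_div_sqrt (y := y) hα hg₁ hg₂ hg₁' hg₂'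
  have hlarge :=
    abs_deltaOp_le_two_div_sqrt_cube (y := y) hα (hg₁.continuous.intervalIntegrable _ _) hg₂L2
  set G₁ := ∫ z in (y - α)..(y + α), |g₁ z|
  set G₂ := ∫ z in (y - α)..(y + α), |g₂ z|
  have hG₁ : 0 ≤ G₁ := intervalIntegral.integral_nonneg (by linarith) fun _ _ ↦ abs_nonneg _
  have hG₂ : 0 ≤ G₂ := intervalIntegral.integral_nonneg (by linarith) fun _ _ ↦ abs_nonneg _
  have hH₁G₂ := mul_nonneg (H1norm_nonneg g₁) hG₂
  have hH₂G₁ := mul_nonneg (H1norm_nonneg g₂) hG₁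
  have hsqrt_two : √2 ≤ 3 := sqrt_le_iff.2 ⟨by norm_num, by norm_num⟩
  rw [mul_min_of_nonneg _ _ zero_le_three, min_mul_of_nonneg _ _ (add_nonneg hH₂G₁ hH₁G₂)]
  refine le_min (hsmall.trans (by gcongr)) (hlarge.trans ?_)
  have : 0 ≤ α⁻¹ * (√α)⁻¹ := by positivity
  nlinarith

/-- Localized (integral-form) bounds on `δ_α[L_s, g]` and `δ_α[g₁, g₂]`. -/
theorem deltaOp_local_bounds :
    ∃ C : ℝ, 0 < C ∧ ∀ s : ℝ, 0 < s → s ≤ 1 → ∀ α : ℝ, 0 < α → ∀ y : ℝ,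
      (∀ g : ℝ → ℝ, Differentiable ℝ g → LocallyIntegrable g →
          LocallyIntegrable (deriv g) →
        |deltaOp α (Ls s) g y| ≤ C * s *
          ∫ t in Set.Icc (-α) α,
            (|deriv g (y + t)| + (Real.sqrt (1 + α ^ 2))⁻¹ * |g (y + t)|)) ∧
      (∀ g₁ g₂ : ℝ → ℝ, (∀ x : ℝ, g₁ (-x) = - g₁ x) → (∀ x : ℝ, g₂ (-x) = - g₂ x) →
          Differentiable ℝ g₁ → Differentiable ℝ g₂ →
          MemLp g₁ 2 volume → MemLp (deriv g₁) 2 volume →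
          MemLp g₂ 2 volume → MemLp (deriv g₂) 2 volume →
        |deltaOp α g₁ g₂ y| ≤ C * min (α ^ (-(1:ℝ)/2)) (α ^ (-(3:ℝ)/2)) *
          ((H1norm g₂) * (∫ t in Set.Icc (-α) α, |g₁ (y + t)|)
            + (H1norm g₁) * ∫ t in Set.Icc (-α) α, |g₂ (y + t)|)) := by
  refine ⟨3, three_pos, fun s hs hs1 α hα y ↦ ⟨?_, ?_⟩⟩
  · intro g hg _ hg'
    exact abs_deltaOp_Ls_le hs hs1 hα hg
      (hg'.integrableOn_isCompact isCompact_uIcc).intervalIntegrable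
  · intro g₁ g₂ _ _ hg₁ hg₂ _ hg₁' hg₂L2 hg₂'
    exact abs_deltaOp_le_min_rpow hα hg₁ hg₂ hg₂L2 hg₁' hg₂'
end

section
/- Define, for a bounded continuous function h : ℝ → ℝ and s ∈ (0,1], R¹[L_s; h](y) := ∫_0^∞ ( L_s'(y+α) − L_s'(y−α) ) · J_α[h](y) · ( F(⨍_α h(y)) + F(⨍_{−α} h(y)) ) dα/α. Then there is an absolute constant C such that for all such h, all s ∈ (0,1] and all y ∈ ℝ: |R¹[L_s; h](y)| ≤ C·s·‖h‖_{L^∞}²·|y|·⟨y⟩^{−2}. -/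
open MeasureTheory Real Set Filter

/-- The symmetrized term `R¹[L_s; h]`. -/
noncomputable def R1op (s : ℝ) (h : ℝ → ℝ) (y : ℝ) : ℝ :=
  ∫ α in Set.Ioi (0:ℝ),
    (deriv (Ls s) (y + α) - deriv (Ls s) (y - α)) * Jop α h h y *
      ((1 + (fint α h y) ^ 2)⁻¹ + (1 + (fint (-α) h y) ^ 2)⁻¹) / α

/-!
With `a = 1 + s²/3`, the kernel is explicit:
`L_s'(y+α) - L_s'(y-α) = -(8s/π) a³ y α / ((1 + a²(y+α)²)(1 + a²(y-α)²))`,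
and since `a ≥ 1` the denominator dominates `(1 + y²)(1 + (α - |y|)²)`. The factor `α` cancels the
`1/α` of the measure, `|J_α[h]| ≤ 4M²` and each `F ≤ 1`, so the integrand is bounded by a multiple of
`s M² |y| / (1 + y²)` times the translated Cauchy density `(1 + (α - |y|)²)⁻¹`, whose integral is `π`.
-/

theorem abs_fint_le {f : ℝ → ℝ} {M : ℝ} (hf : ∀ x, |f x| ≤ M) (α y : ℝ) :
    |fint α f y| ≤ M := by
  have hM : 0 ≤ M := (abs_nonneg _).trans (hf 0)
  have hI : |∫ z in (y - α)..y, f z| ≤ M * |α| := by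
    simpa using intervalIntegral.norm_integral_le_of_norm_le_const (a := y - α) (b := y)
      fun x _ => (Real.norm_eq_abs (f x)).trans_le (hf x)
  rcases eq_or_ne α 0 with rfl | hα
  -- `fint 0 f y = 0` because `1 / 0 = 0`
  · simpa [fint] using hM
  calc |fint α f y| = |α|⁻¹ * |∫ z in (y - α)..y, f z| := by simp [fint, abs_mul]
    _ ≤ |α|⁻¹ * (M * |α|) := by gcongr
    _ = M := by field_simp

theorem abs_Jop_le {f g : ℝ → ℝ} {M N : ℝ} (hf : ∀ x, |f x| ≤ M) (hg : ∀ x, |g x| ≤ N)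
    (α y : ℝ) : |Jop α f g y| ≤ 4 * (M * N) := by
  have hprod : ∀ a b : ℝ, |a| ≤ M → |b| ≤ N → |a * b| ≤ M * N := fun a b ha hb => by
    rw [abs_mul]; exact mul_le_mul ha hb (abs_nonneg _) ((abs_nonneg _).trans ha)
  have h₁ := hprod _ _ (abs_fint_le hf α y) (abs_fint_le hg α y)
  have h₂ := hprod _ _ (hf y) (hg y)
  have h₃ := hprod _ _ (abs_fint_le hf (-α) y) (abs_fint_le hg (-α) y)
  have hsum := abs_add_three (fint α f y * fint α g y) (-(2 * (f y * g y)))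
    (fint (-α) f y * fint (-α) g y)
  rw [abs_neg, abs_mul 2, abs_two] at hsum
  rw [Jop, mul_assoc 2, sub_eq_add_neg]
  linarith

theorem hasDerivAt_Ls (s x : ℝ) :
    HasDerivAt (Ls s) (2 * s / π * (1 + s ^ 2 / 3) / (1 + ((1 + s ^ 2 / 3) * x) ^ 2)) x := by
  have h := ((Real.hasDerivAt_arctan _).comp x ((hasDerivAt_id x).const_mul (1 + s ^ 2 / 3))).const_mul
    (2 * s / π)
  exact h.congr_deriv (by simp only [id, mul_one]; ring)

theorem deriv_Ls_add_sub_deriv_Ls_sub (s y α : ℝ) :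
    deriv (Ls s) (y + α) - deriv (Ls s) (y - α) =
      -(8 * s / π * (1 + s ^ 2 / 3) ^ 3 * y * α) /
        ((1 + ((1 + s ^ 2 / 3) * (y + α)) ^ 2) * (1 + ((1 + s ^ 2 / 3) * (y - α)) ^ 2)) := by
  rw [(hasDerivAt_Ls s _).deriv, (hasDerivAt_Ls s _).deriv]
  field_simp
  ring

-- Of `(y + α)²` and `(y - α)²`, one is `(α - |y|)²` and the other is at least `y²`.
theorem one_add_sq_mul_one_add_sub_abs_sq_le {y α : ℝ} (hα : 0 ≤ α) :
    (1 + y ^ 2) * (1 + (α - |y|) ^ 2) ≤ (1 + (y + α) ^ 2) * (1 + (y - α) ^ 2) := by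
  rcases abs_cases y with ⟨hy, hy0⟩ | ⟨hy, hy0⟩ <;> rw [hy]
  · have : y ^ 2 ≤ (y + α) ^ 2 := by nlinarith
    calc (1 + y ^ 2) * (1 + (α - y) ^ 2) ≤ (1 + (y + α) ^ 2) * (1 + (α - y) ^ 2) := by gcongr
      _ = _ := by ring
  · have : y ^ 2 ≤ (y - α) ^ 2 := by nlinarith
    calc (1 + y ^ 2) * (1 + (α - -y) ^ 2) ≤ (1 + (y - α) ^ 2) * (1 + (α - -y) ^ 2) := by gcongr
      _ = _ := by ring

theorem one_add_sq_le_one_add_mul_sq {a x : ℝ} (ha : 1 ≤ a) : 1 + x ^ 2 ≤ 1 + (a * x) ^ 2 := by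
  rw [mul_pow]
  nlinarith [sq_nonneg x, mul_le_mul ha ha zero_le_one (by linarith : (0:ℝ) ≤ a)]

theorem abs_deriv_Ls_add_sub_deriv_Ls_sub_le {s : ℝ} (hs : 0 ≤ s) (hs1 : s ≤ 1) (y : ℝ)
    {α : ℝ} (hα : 0 ≤ α) :
    |deriv (Ls s) (y + α) - deriv (Ls s) (y - α)| ≤
      512 / (27 * π) * s * |y| * α / ((1 + y ^ 2) * (1 + (α - |y|) ^ 2)) := by
  rw [deriv_Ls_add_sub_deriv_Ls_sub]
  set a := 1 + s ^ 2 / 3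
  have ha : 1 ≤ a := le_add_of_nonneg_right (by positivity)
  have ha' : a ^ 3 ≤ 64 / 27 := by
    calc a ^ 3 ≤ (4 / 3) ^ 3 := by gcongr; simp only [a]; nlinarith
      _ = 64 / 27 := by norm_num
  have hnum : |8 * s / π * a ^ 3 * y * α| ≤ 512 / (27 * π) * s * |y| * α := by
    rw [abs_mul, abs_mul, abs_of_nonneg hα, abs_of_nonneg (by positivity)]
    calc 8 * s / π * a ^ 3 * |y| * α ≤ 8 * s / π * (64 / 27) * |y| * α := by gcongr
      _ = _ := by ring
  have hden : (1 + y ^ 2) * (1 + (α - |y|) ^ 2) ≤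
      (1 + (a * (y + α)) ^ 2) * (1 + (a * (y - α)) ^ 2) :=
    (one_add_sq_mul_one_add_sub_abs_sq_le hα).trans <|
      mul_le_mul (one_add_sq_le_one_add_mul_sq ha) (one_add_sq_le_one_add_mul_sq ha)
        (by positivity) (by positivity)
  rw [abs_div, abs_neg, abs_of_pos (a := (1 + (a * (y + α)) ^ 2) * (1 + (a * (y - α)) ^ 2))
    (by positivity)]
  exact div_le_div₀ (by positivity) hnum (by positivity) hden

theorem setIntegral_Ioi_inv_one_add_sub_sq_le (c : ℝ) :
    ∫ α in Ioi (0 : ℝ), (1 + (α - c) ^ 2)⁻¹ ≤ π := by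
  calc _ ≤ ∫ α, (1 + (α - c) ^ 2)⁻¹ :=
        setIntegral_le_integral (integrable_inv_one_add_sq.comp_sub_right c)
          (.of_forall fun _ => by positivity)
    _ = π := by
        rw [integral_sub_right_eq_self (fun x => (1 + x ^ 2)⁻¹) c, integral_univ_inv_one_add_sq]

theorem abs_R1op_integrand_le {s : ℝ} (hs : 0 ≤ s) (hs1 : s ≤ 1) {h : ℝ → ℝ} {M : ℝ}
    (hM : ∀ x, |h x| ≤ M) (y : ℝ) {α : ℝ} (hα : 0 < α) :
    |(deriv (Ls s) (y + α) - deriv (Ls s) (y - α)) * Jop α h h y *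
        ((1 + fint α h y ^ 2)⁻¹ + (1 + fint (-α) h y ^ 2)⁻¹) / α| ≤
      4096 / (27 * π) * s * M ^ 2 * |y| / (1 + y ^ 2) * (1 + (α - |y|) ^ 2)⁻¹ := by
  have hF : ∀ t : ℝ, (1 + t ^ 2)⁻¹ ≤ 1 := fun t =>
    inv_le_one_of_one_le₀ (le_add_of_nonneg_right (sq_nonneg t))
  have hM0 : 0 ≤ M := (abs_nonneg _).trans (hM 0)
  rw [abs_div, abs_mul, abs_mul, abs_of_pos hα,
    abs_of_nonneg (a := (1 + fint α h y ^ 2)⁻¹ + _) (by positivity)]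
  calc _ ≤ 512 / (27 * π) * s * |y| * α / ((1 + y ^ 2) * (1 + (α - |y|) ^ 2)) *
        (4 * (M * M)) * (1 + 1) / α := by
        gcongr ?_ * ?_ * ?_ / _
        · exact abs_deriv_Ls_add_sub_deriv_Ls_sub_le hs hs1 y hα.le
        · exact abs_Jop_le hM hM α y
        · exact add_le_add (hF _) (hF _)
    _ = _ := by field_simp; ring

/-- Pointwise decay of `R¹[L_s; h]` for bounded continuous `h`. -/
theorem R1op_bound :
    ∃ C : ℝ, 0 < C ∧ ∀ s : ℝ, 0 < s → s ≤ 1 →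
      ∀ h : ℝ → ℝ, Continuous h → ∀ M : ℝ, (∀ x : ℝ, |h x| ≤ M) →
      ∀ y : ℝ, |R1op s h y| ≤ C * s * M ^ 2 * |y| * (1 + y ^ 2)⁻¹ := by
  refine ⟨4096 / 27, by norm_num, fun s hs hs1 h _ M hM y => ?_⟩
  set K := 4096 / (27 * π) * s * M ^ 2 * |y| / (1 + y ^ 2)
  have hbound : ∀ᵐ α ∂volume.restrict (Ioi (0 : ℝ)), ‖(deriv (Ls s) (y + α) -
      deriv (Ls s) (y - α)) * Jop α h h y * ((1 + fint α h y ^ 2)⁻¹ + (1 + fint (-α) h y ^ 2)⁻¹) /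
        α‖ ≤ K * (1 + (α - |y|) ^ 2)⁻¹ := by
    filter_upwards [ae_restrict_mem measurableSet_Ioi] with α hα
    exact abs_R1op_integrand_le hs.le hs1 hM y hα
  calc |R1op s h y| ≤ ∫ α in Ioi 0, K * (1 + (α - |y|) ^ 2)⁻¹ :=
        norm_integral_le_of_norm_le
          ((integrable_inv_one_add_sq.comp_sub_right |y|).const_mul K).integrableOn hbound
    _ = K * ∫ α in Ioi 0, (1 + (α - |y|) ^ 2)⁻¹ := integral_const_mul K _
    _ ≤ K * π := by gcongr; exact setIntegral_Ioi_inv_one_add_sub_sq_le |y|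
    _ = 4096 / 27 * s * M ^ 2 * |y| * (1 + y ^ 2)⁻¹ := by
        simp only [K]; field_simp
end
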